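/- arXiv:2008.11814 — 6 statements merged into one kernel-verified Lean document; each statement's English description precedes it below -/
import Mathlib

section
/- Let p be an odd prime, write p − 1 = 2^r·d with d odd and r ≥ 1, let α be a quadratic residue and β a quadratic non-residue in the multiplicative group of the field Z/pZ. Then there exists a non-negative integer m such that α^d · β^(2md) = 1 in Z/pZ; consequently (α^((d+1)/2) · β^(md))^2 = α, i.e. α^((d+1)/2) · β^(md) is a square root of α modulo p. -/
/-- **Theorem 1 (Quadratic residue modulo p).**
Let `p` be an odd prime, `p - 1 = 2^r * d` with `d` odd and `r ≥ 1`, `α` a quadratic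
residue and `β` a quadratic non-residue in `(Z/pZ)*`. Then there is `m ≥ 0` with
`α^d * β^(2md) = 1`, hence `α^((d+1)/2) * β^(md)` is a square root of `α` mod `p`. -/
theorem sqrt_mod_p_exists_m (p : ℕ) (hp : p.Prime) (hodd : Odd p)
    (r d : ℕ) (hr : 1 ≤ r) (hd : Odd d) (hpd : p - 1 = 2 ^ r * d)
    (α β : ZMod p) (hα : α ≠ 0) (hβ : β ≠ 0)
    (hαres : α ^ ((p - 1) / 2) = 1) (hβnres : β ^ ((p - 1) / 2) = -1) :
    ∃ m : ℕ, α ^ d * β ^ (2 * m * d) = 1 ∧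
      (α ^ ((d + 1) / 2) * β ^ (m * d)) ^ 2 = α := by
  haveI : Fact p.Prime := ⟨hp⟩
  obtain ⟨s, rfl⟩ : ∃ s, r = s + 1 := ⟨r - 1, (Nat.succ_pred_eq_of_pos hr).symm⟩
  have hhalf : (p - 1) / 2 = 2 ^ s * d := by
    rw [hpd, pow_succ, mul_comm (2 ^ s) 2, mul_assoc, Nat.mul_div_cancel_left _ (by norm_num)]
  rw [hhalf] at hαres hβnres
  -- key descent lemma
  have key : ∀ j, j ≤ s → ∀ x : ZMod p, x ^ (2 ^ j) = 1 → ∃ m, x * β ^ (2 * m * d) = 1 := by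
    intro j
    induction j with
    | zero =>
      intro _ x hx
      exact ⟨0, by simpa using hx⟩
    | succ j ih =>
      intro hj x hx
      have h2 : (x ^ (2 ^ j)) * (x ^ (2 ^ j)) = 1 := by
        rw [← pow_add, ← two_mul, ← pow_succ']
        exact hx
      rcases mul_self_eq_one_iff.mp h2 with h1 | h1
      · exact ih (le_trans (Nat.le_succ j) hj) x h1
      · obtain ⟨k, hk⟩ := Nat.exists_eq_add_of_le hj
        have hy : (x * β ^ (2 ^ (k + 1) * d)) ^ (2 ^ j) = 1 := by
          rw [mul_pow, h1, ← pow_mul]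
          have he : 2 ^ (k + 1) * d * 2 ^ j = 2 ^ s * d := by
            rw [hk]; ring
          rw [he, hβnres]
          ring
        obtain ⟨m', hm'⟩ := ih (le_trans (Nat.le_succ j) hj) _ hy
        refine ⟨2 ^ k + m', ?_⟩
        have he2 : 2 * (2 ^ k + m') * d = 2 ^ (k + 1) * d + 2 * m' * d := by ring
        rw [he2, pow_add, ← mul_assoc]
        exact hm'
  have hαd : (α ^ d) ^ (2 ^ s) = 1 := by
    rw [← pow_mul, mul_comm]; exact hαres
  obtain ⟨m, hm⟩ := key s le_rfl (α ^ d) hαd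
  refine ⟨m, hm, ?_⟩
  obtain ⟨t, rfl⟩ := hd
  have hdt : (2 * t + 1 + 1) / 2 = t + 1 := by omega
  rw [hdt, mul_pow, ← pow_mul, ← pow_mul]
  calc α ^ ((t + 1) * 2) * β ^ (m * (2 * t + 1) * 2)
      = α * (α ^ (2 * t + 1) * β ^ (2 * m * (2 * t + 1))) := by ring
    _ = α := by rw [hm, mul_one]
end

section
/- Let p be an odd prime, write p − 1 = 2^r·d with d odd and r ≥ 1, let α be a quadratic residue and β a quadratic non-residue in the multiplicative group of the field Z/pZ. If k is an integer with 0 ≤ k ≤ r − 1 such that α^(2^k·d) = 1, then there exists an integer i with 0 ≤ i ≤ 2^k − 1 such that (α^((d+1)/2) · β^(2^(r−1−k)·i·d))^2 = α; that is, a square root of α modulo p lies in the set { α^((d+1)/2) · β^(2^(r−1−k)·i·d) : 0 ≤ i ≤ 2^k − 1 }. -/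
/-!
`β ^ d` is a primitive `2 ^ r`-th root of unity, because its `2 ^ (r - 1)`-th power is `-1`, so
`δ = β ^ (2 ^ (r - k) * d)` is a primitive `2 ^ k`-th root of unity. Since `(α ^ d) ^ 2 ^ k = 1`,
the root of unity `α ^ (-d)` is a power `δ ^ i` with `i < 2 ^ k`, and then
`(α ^ ((d + 1) / 2) * β ^ (2 ^ (r - 1 - k) * i * d)) ^ 2 = α * α ^ d * δ ^ i = α`.
-/

theorem IsPrimitiveRoot.of_pow_two_pow_eq_neg_one {R : Type*} [CommRing R] {ζ : R} {n : ℕ}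
    (h2 : (-1 : R) ≠ 1) (h : ζ ^ 2 ^ n = -1) : IsPrimitiveRoot ζ (2 ^ (n + 1)) := by
  rw [← orderOf_eq_prime_pow (by rwa [h]) (by rw [pow_succ, pow_mul, h, neg_one_sq])]
  exact .orderOf ζ

theorem exists_sq_eq_of_pow_two_pow_mul_eq_one {F : Type*} [Field F] {α β : F} {r d k : ℕ}
    (h2 : (-1 : F) ≠ 1) (hd : Odd d) (hk : k < r) (hβ : β ^ (2 ^ (r - 1) * d) = -1)
    (hα : α ^ (2 ^ k * d) = 1) :
    ∃ i < 2 ^ k, (α ^ ((d + 1) / 2) * β ^ (2 ^ (r - 1 - k) * i * d)) ^ 2 = α := by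
  obtain ⟨r, rfl⟩ : ∃ n, r = n + 1 := ⟨r - 1, by omega⟩
  obtain ⟨e, rfl⟩ := hd
  have hζ : IsPrimitiveRoot (β ^ (2 * e + 1)) (2 ^ (r + 1)) :=
    .of_pow_two_pow_eq_neg_one h2 (by rw [← pow_mul, mul_comm]; simpa using hβ)
  have hδ : IsPrimitiveRoot ((β ^ (2 * e + 1)) ^ 2 ^ (r + 1 - k)) (2 ^ k) := by
    have := hζ.pow_of_dvd (pow_ne_zero _ two_ne_zero) (pow_dvd_pow 2 (Nat.sub_le (r + 1) k))
    rwa [Nat.pow_div (Nat.sub_le (r + 1) k) two_pos, Nat.sub_sub_self hk.le] at this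
  have hα0 : α ^ (2 * e + 1) ≠ 0 := by
    rintro h0
    rw [pow_mul', h0, zero_pow (pow_ne_zero _ two_ne_zero)] at hα
    exact zero_ne_one hα
  obtain ⟨i, hi, hδi⟩ := hδ.eq_pow_of_pow_eq_one (ξ := (α ^ (2 * e + 1))⁻¹)
    (by rw [inv_pow, ← pow_mul, mul_comm, hα, inv_one])
  refine ⟨i, hi, ?_⟩
  have he : (2 * e + 1 + 1) / 2 = e + 1 := by omega
  have hpow : 2 ^ (r + 1 - k) = 2 ^ (r + 1 - 1 - k) * 2 := by rw [← pow_succ]; congr 1; omega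
  calc (α ^ ((2 * e + 1 + 1) / 2) * β ^ (2 ^ (r + 1 - 1 - k) * i * (2 * e + 1))) ^ 2
      = α * α ^ (2 * e + 1) * ((β ^ (2 * e + 1)) ^ 2 ^ (r + 1 - k)) ^ i := by
        rw [he, hpow]; ring
    _ = α := by rw [hδi, mul_assoc, mul_inv_cancel₀ hα0, mul_one]

theorem sqrt_mod_p_in_solution_set_general (p : ℕ) (hp : p.Prime)
    (r d : ℕ) (hr : 1 ≤ r) (hd : Odd d) (hpd : p - 1 = 2 ^ r * d)
    (α β : ZMod p)
    (hβnres : β ^ ((p - 1) / 2) = -1)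
    (k : ℕ) (hk : k ≤ r - 1) (hαk : α ^ (2 ^ k * d) = 1) :
    ∃ i : ℕ, i ≤ 2 ^ k - 1 ∧
      (α ^ ((d + 1) / 2) * β ^ (2 ^ (r - 1 - k) * i * d)) ^ 2 = α := by
  have : Fact p.Prime := ⟨hp⟩
  have hr2 : 2 ^ r = 2 * 2 ^ (r - 1) := by rw [← pow_succ']; congr 1; omega
  rw [hr2, mul_assoc] at hpd
  have hmd : 0 < 2 ^ (r - 1) * d := by have := hd.pos; positivity
  have : Fact (2 < p) := ⟨by omega⟩
  have hhalf : (p - 1) / 2 = 2 ^ (r - 1) * d := by omega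
  obtain ⟨i, hi, hsq⟩ := exists_sq_eq_of_pow_two_pow_mul_eq_one ZMod.neg_one_ne_one hd
    (by omega) (hhalf ▸ hβnres) hαk
  exact ⟨i, by omega, hsq⟩

/-- **Theorem 2 (Set of possible solutions mod p).**
If `α` is a quadratic residue, `β` a quadratic non-residue mod the odd prime `p`,
`p - 1 = 2^r * d` with `d` odd, and `0 ≤ k ≤ r - 1` satisfies `α^(2^k d) = 1`, then
a square root of `α` lies in `{ α^((d+1)/2) * β^(2^(r-1-k) i d) : 0 ≤ i ≤ 2^k - 1 }`. -/
theorem sqrt_mod_p_in_solution_set (p : ℕ) (hp : p.Prime) (hodd : Odd p)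
    (r d : ℕ) (hr : 1 ≤ r) (hd : Odd d) (hpd : p - 1 = 2 ^ r * d)
    (α β : ZMod p) (hα : α ≠ 0) (hβ : β ≠ 0)
    (hαres : α ^ ((p - 1) / 2) = 1) (hβnres : β ^ ((p - 1) / 2) = -1)
    (k : ℕ) (hk : k ≤ r - 1) (hαk : α ^ (2 ^ k * d) = 1) :
    ∃ i : ℕ, i ≤ 2 ^ k - 1 ∧
      (α ^ ((d + 1) / 2) * β ^ (2 ^ (r - 1 - k) * i * d)) ^ 2 = α :=
  sqrt_mod_p_in_solution_set_general p hp r d hr hd hpd α β hβnres k hk hαk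
end

section
/- Let p be an odd prime and k ≥ 1 an integer, and write φ(p^k) = 2^R·D with D odd and R ≥ 1, where φ is Euler's totient. Let α be a unit of Z/p^kZ with α^(φ(p^k)/2) = 1 (a quadratic residue) and β a unit with β^(φ(p^k)/2) = −1 (a quadratic non-residue). Then there exists a non-negative integer m such that α^D · β^(2mD) = 1 in Z/p^kZ; consequently (α^((D+1)/2) · β^(mD))^2 = α, i.e. α^((D+1)/2) · β^(mD) is a square root of α modulo p^k. -/
open Finset

lemma count_two_pow_roots {G : Type*} [CommGroup G] [Fintype G] [DecidableEq G]
    (ε : G) (hK : ∀ z : G, z ^ 2 = 1 → z = 1 ∨ z = ε) :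
    ∀ s : ℕ, (univ.filter fun z : G => z ^ 2 ^ s = 1).card ≤ 2 ^ s := by
  intro s
  induction s with
  | zero =>
    have : (univ.filter fun z : G => z ^ 2 ^ 0 = 1) ⊆ {1} := by
      intro z hz
      simp only [mem_filter, pow_zero, pow_one] at hz
      simp [hz.2]
    simpa using (card_le_card this)
  | succ s ih =>
    have hmaps : ∀ z ∈ (univ.filter fun z : G => z ^ 2 ^ (s + 1) = 1),
        z ^ 2 ∈ (univ.filter fun z : G => z ^ 2 ^ s = 1) := by
      intro z hz
      simp only [mem_filter, mem_univ, true_and] at hz ⊢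
      rw [← pow_mul, ← pow_succ']
      exact hz
    have hfib : ∀ a ∈ (univ.filter fun z : G => z ^ 2 ^ s = 1),
        ((univ.filter fun z : G => z ^ 2 ^ (s + 1) = 1).filter
          fun z => z ^ 2 = a).card ≤ 2 := by
      intro a _
      set F := (univ.filter fun z : G => z ^ 2 ^ (s + 1) = 1).filter
          fun z => z ^ 2 = a with hF
      rcases F.eq_empty_or_nonempty with h | ⟨w, hw⟩
      · simp [h]
      · have hw2 : w ^ 2 = a := (mem_filter.1 hw).2
        have : F ⊆ insert w {ε * w} := by
          intro z hz
          have hz2 : z ^ 2 = a := (mem_filter.1 hz).2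
          have : (z * w⁻¹) ^ 2 = 1 := by
            rw [mul_pow, hz2, ← hw2, inv_pow, mul_inv_cancel]
          rcases hK _ this with h1 | h1
          · have hzw : z = w := by rwa [mul_inv_eq_one] at h1
            simp [hzw]
          · have hzw : z = ε * w := by rw [← h1, inv_mul_cancel_right]
            simp [hzw]
        calc F.card ≤ (insert w ({ε * w} : Finset G)).card := card_le_card this
          _ ≤ 2 := by
            apply le_trans (card_insert_le _ _); simp
    calc (univ.filter fun z : G => z ^ 2 ^ (s + 1) = 1).card
        ≤ 2 * (univ.filter fun z : G => z ^ 2 ^ s = 1).card :=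
          card_le_mul_card_image_of_maps_to hmaps 2 hfib
      _ ≤ 2 * 2 ^ s := by omega
      _ = 2 ^ (s + 1) := (pow_succ' 2 s).symm

lemma zmod_sq_roots (p : ℕ) (hp : p.Prime) (hodd : Odd p) (k : ℕ) (_hk : 1 ≤ k)
    (x : ZMod (p ^ k)) (hx : x ^ 2 = 1) : x = 1 ∨ x = -1 := by
  obtain ⟨a, rfl⟩ := ZMod.intCast_surjective x
  have hdvd : ((p : ℤ)) ^ k ∣ (a - 1) * (a + 1) := by
    have : ((((a - 1) * (a + 1) : ℤ)) : ZMod (p ^ k)) = 0 := by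
      push_cast
      linear_combination hx
    have := (ZMod.intCast_zmod_eq_zero_iff_dvd _ _).1 this
    simpa [Int.natCast_pow] using this
  have hpZ : Prime (p : ℤ) := Nat.prime_iff_prime_int.1 hp
  have hnot : ¬ ((p:ℤ) ∣ a - 1 ∧ (p:ℤ) ∣ a + 1) := by
    rintro ⟨h1, h2⟩
    have : (p:ℤ) ∣ 2 := by
      have := dvd_sub h2 h1
      simpa using this
    have h2' : p ∣ 2 := by exact_mod_cast this
    have hle := Nat.le_of_dvd (by norm_num) h2'
    obtain ⟨t, ht⟩ := hodd
    have := hp.two_le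
    omega
  rcases not_and_or.1 hnot with h | h
  · -- p ∤ a - 1, so p^k ∣ a + 1, x = -1
    right
    have hco : IsCoprime ((p:ℤ) ^ k) (a - 1) :=
      IsCoprime.pow_left ((hpZ.coprime_iff_not_dvd).2 h)
    have : ((p:ℤ)) ^ k ∣ a + 1 := hco.dvd_of_dvd_mul_left hdvd
    have : (((a + 1 : ℤ)) : ZMod (p ^ k)) = 0 := by
      rw [ZMod.intCast_zmod_eq_zero_iff_dvd]
      exact_mod_cast this
    push_cast at this
    linear_combination this
  · left
    have hco : IsCoprime ((p:ℤ) ^ k) (a + 1) :=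
      IsCoprime.pow_left ((hpZ.coprime_iff_not_dvd).2 h)
    have : ((p:ℤ)) ^ k ∣ a - 1 := hco.dvd_of_dvd_mul_right hdvd
    have : (((a - 1 : ℤ)) : ZMod (p ^ k)) = 0 := by
      rw [ZMod.intCast_zmod_eq_zero_iff_dvd]
      exact_mod_cast this
    push_cast at this
    linear_combination this

/-- **Theorem 3 (Quadratic residue modulo p^k).**
Let `p` be an odd prime, `k ≥ 1`, `φ(p^k) = 2^R * D` with `D` odd and `R ≥ 1`.
If `α` is a unit of `Z/p^kZ` with `α^(φ(p^k)/2) = 1` and `β` a unit with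
`β^(φ(p^k)/2) = -1`, then there is `m ≥ 0` with `α^D * β^(2mD) = 1`, hence
`α^((D+1)/2) * β^(mD)` is a square root of `α` mod `p^k`. -/
theorem sqrt_mod_p_pow_exists_m (p : ℕ) (hp : p.Prime) (hodd : Odd p)
    (k : ℕ) (hk : 1 ≤ k)
    (R D : ℕ) (hR : 1 ≤ R) (hD : Odd D) (hphi : Nat.totient (p ^ k) = 2 ^ R * D)
    (α β : (ZMod (p ^ k))ˣ)
    (hαres : α ^ (Nat.totient (p ^ k) / 2) = 1)
    (hβnres : β ^ (Nat.totient (p ^ k) / 2) = -1) :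
    ∃ m : ℕ, α ^ D * β ^ (2 * m * D) = 1 ∧
      (α ^ ((D + 1) / 2) * β ^ (m * D)) ^ 2 = α := by
  have hp3 : 3 ≤ p := by
    obtain ⟨t, ht⟩ := hodd
    have := hp.two_le
    omega
  have hpk3 : 2 < p ^ k := lt_of_lt_of_le (by omega) (Nat.le_self_pow (by omega) p)
  haveI : Fact (2 < p ^ k) := ⟨hpk3⟩
  haveI : NeZero (p ^ k) := ⟨by positivity⟩
  have hne : (-1 : (ZMod (p ^ k))ˣ) ≠ 1 := by
    intro h
    have : (-1 : ZMod (p ^ k)) = 1 := by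
      have := congrArg (Units.val) h
      simpa using this
    exact ZMod.neg_one_ne_one this
  -- key: half the totient
  have hhalf : Nat.totient (p ^ k) / 2 = 2 ^ (R - 1) * D := by
    rw [hphi, show 2 ^ R = 2 * 2 ^ (R - 1) by
      rw [← pow_succ']; congr 1; omega]
    rw [mul_assoc, Nat.mul_div_cancel_left _ (by norm_num)]
  rw [hhalf] at hαres hβnres
  classical
  have hK : ∀ z : (ZMod (p ^ k))ˣ, z ^ 2 = 1 → z = 1 ∨ z = -1 := by
    intro z hz
    have : ((z : ZMod (p ^ k))) ^ 2 = 1 := by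
      rw [← Units.val_pow_eq_pow_val, hz, Units.val_one]
    rcases zmod_sq_roots p hp hodd k hk _ this with h | h
    · left; exact Units.ext (by simpa using h)
    · right; exact Units.ext (by simpa using h)
  -- b = β ^ D has order 2 ^ R
  set b := β ^ D with hb
  have hbtot : b ^ 2 ^ R = 1 := by
    rw [hb, ← pow_mul, mul_comm, ← hphi]
    exact ZMod.pow_totient β
  have hbhalf : b ^ 2 ^ (R - 1) = -1 := by
    rw [hb, ← pow_mul, mul_comm]
    exact hβnres
  have horder : orderOf b = 2 ^ R := by
    have h1 : orderOf b ∣ 2 ^ R := orderOf_dvd_of_pow_eq_one hbtot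
    obtain ⟨t, ht, hteq⟩ := (Nat.dvd_prime_pow Nat.prime_two).1 h1
    rcases Nat.lt_or_ge t R with hlt | hge
    · exfalso
      have : b ^ 2 ^ (R - 1) = 1 := by
        apply orderOf_dvd_iff_pow_eq_one.1
        rw [hteq]
        exact pow_dvd_pow 2 (by omega)
      rw [hbhalf] at this
      exact hne this
    · rw [hteq]; congr 1; omega
  -- x = α ^ D lies in the 2^R-roots of unity
  set x := α ^ D with hx
  have hxhalf : x ^ 2 ^ (R - 1) = 1 := by
    rw [hx, ← pow_mul, mul_comm]
    exact hαres
  have hxR : x ^ 2 ^ R = 1 := by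
    rw [show R = (R - 1) + 1 by omega, pow_succ, pow_mul, hxhalf, one_pow]
  -- the set of 2^R-roots of unity equals powers of b
  set S := univ.filter (fun z : (ZMod (p ^ k))ˣ => z ^ 2 ^ R = 1) with hS
  have hScard : S.card ≤ 2 ^ R := count_two_pow_roots (-1) hK R
  set B := (range (2 ^ R)).image (fun i => b ^ i) with hB
  have hBsub : B ⊆ S := by
    intro z hz
    obtain ⟨i, _, rfl⟩ := mem_image.1 hz
    simp only [hS, mem_filter, mem_univ, true_and]
    rw [← pow_mul, mul_comm, pow_mul, hbtot, one_pow]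
  have hBcard : B.card = 2 ^ R := by
    rw [hB, card_image_of_injOn, card_range]
    intro i hi j hj hij
    exact pow_injOn_Iio_orderOf (by simpa [horder] using mem_range.1 hi)
      (by simpa [horder] using mem_range.1 hj) hij
  have hBS : B = S := eq_of_subset_of_card_le hBsub (by omega)
  have hxS : x ∈ S := by simp [hS, hxR]
  rw [← hBS] at hxS
  obtain ⟨t, _, hteq⟩ := mem_image.1 hxS
  -- t is even
  have ht2 : 2 ∣ t := by
    have : b ^ (t * 2 ^ (R - 1)) = 1 := by
      rw [pow_mul, hteq, hxhalf]
    have hdvd := orderOf_dvd_of_pow_eq_one this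
    rw [horder] at hdvd
    have h2R : (2:ℕ) ^ R = 2 ^ (R - 1) * 2 := by rw [← pow_succ]; congr 1; omega
    rw [h2R, mul_comm t] at hdvd
    exact (Nat.mul_dvd_mul_iff_left (a := 2 ^ (R - 1)) (by positivity)).1 hdvd
  obtain ⟨j, rfl⟩ := ht2
  have hfirst : α ^ D * β ^ (2 * (j * (2 ^ (R - 1) - 1)) * D) = 1 := by
    have hxe : α ^ D = β ^ (D * (2 * j)) := by
      rw [← hx, ← hteq, hb, ← pow_mul]
    rw [hxe, ← pow_add]
    have hexp : D * (2 * j) + 2 * (j * (2 ^ (R - 1) - 1)) * D =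
        (2 ^ R * D) * j := by
      have h1 : 1 ≤ 2 ^ (R - 1) := Nat.one_le_two_pow
      have h2 : 2 ^ R = 2 * 2 ^ (R - 1) := by
        rw [← pow_succ']; congr 1; omega
      obtain ⟨c, hc⟩ := Nat.exists_eq_add_of_le h1
      rw [h2, hc, Nat.add_sub_cancel_left]
      ring
    rw [hexp, ← hphi, pow_mul, ZMod.pow_totient, one_pow]
  refine ⟨j * (2 ^ (R - 1) - 1), hfirst, ?_⟩
  have hDeven : (D + 1) / 2 * 2 = D + 1 := by
    obtain ⟨c, hc⟩ := hD
    omega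
  rw [mul_pow, ← pow_mul, ← pow_mul, hDeven]
  have hsplit : α ^ (D + 1) = α * α ^ D := by rw [pow_succ, mul_comm]
  rw [hsplit, show j * (2 ^ (R - 1) - 1) * D * 2 = 2 * (j * (2 ^ (R - 1) - 1)) * D by ring,
    mul_assoc, hfirst, mul_one]
end

section
/- Let p be an odd prime and k ≥ 1 an integer, and write φ(p^k) = 2^R·D with D odd and R ≥ 1, where φ is Euler's totient. Let α be a unit of Z/p^kZ with α^(φ(p^k)/2) = 1 and β a unit with β^(φ(p^k)/2) = −1. If j is an integer with 0 ≤ j ≤ R − 1 such that α^(2^j·D) = 1, then there exists an integer i with 0 ≤ i ≤ 2^j − 1 such that (α^((D+1)/2) · β^(2^(R−1−j)·i·D))^2 = α; that is, a square root of α modulo p^k lies in the set { α^((D+1)/2) · β^(2^(R−1−j)·i·D) : 0 ≤ i ≤ 2^j − 1 }. -/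
lemma zmod_sq_eq_one (p k : ℕ) (hp : p.Prime) (hodd : Odd p) (hk : 1 ≤ k)
    (x : ZMod (p ^ k)) (h : x ^ 2 = 1) : x = 1 ∨ x = -1 := by
  haveI : NeZero (p ^ k) := ⟨pow_ne_zero _ hp.pos.ne'⟩
  set a : ℤ := (x.val : ℤ) with ha
  have hxa : ((a : ℤ) : ZMod (p ^ k)) = x := by
    rw [ha, Int.cast_natCast, ZMod.natCast_val, ZMod.cast_id]
  have h0 : (((a - 1) * (a + 1) : ℤ) : ZMod (p ^ k)) = 0 := by
    push_cast [hxa]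
    linear_combination h
  have hdvd : ((p : ℤ)) ^ k ∣ (a - 1) * (a + 1) := by
    have := (ZMod.intCast_zmod_eq_zero_iff_dvd _ _).mp h0
    exact_mod_cast this
  have hpp : Prime (p : ℤ) := (Int.prime_iff_natAbs_prime.mpr (by simpa using hp))
  have hpd : (p : ℤ) ∣ (a - 1) * (a + 1) := dvd_trans (dvd_pow_self _ (by omega)) hdvd
  have h2 : ¬ ((p : ℤ) ∣ 2) := by
    intro hd
    have hd' : p ∣ 2 := by exact_mod_cast hd
    have h4 := Nat.le_of_dvd (by norm_num) hd'
    have h3 := hp.two_le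
    have hp2 : p = 2 := by omega
    rw [hp2] at hodd
    exact (by norm_num : ¬ Odd 2) hodd
  rcases hpp.dvd_mul.mp hpd with hc | hc
  · left
    have hnot : ¬ ((p : ℤ) ∣ (a + 1)) := by
      intro hd
      exact h2 (by have := dvd_sub hd hc; simpa using this)
    have hcop : IsCoprime ((p : ℤ) ^ k) (a + 1) :=
      (hpp.coprime_iff_not_dvd.mpr hnot).pow_left
    have : ((p : ℤ)) ^ k ∣ (a - 1) := hcop.dvd_of_dvd_mul_right hdvd
    have : (((a - 1) : ℤ) : ZMod (p ^ k)) = 0 :=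
      (ZMod.intCast_zmod_eq_zero_iff_dvd _ _).mpr (by exact_mod_cast this)
    push_cast [hxa] at this
    linear_combination this
  · right
    have hnot : ¬ ((p : ℤ) ∣ (a - 1)) := by
      intro hd
      exact h2 (by have := dvd_sub hc hd; simpa using this)
    have hcop : IsCoprime ((p : ℤ) ^ k) (a - 1) :=
      (hpp.coprime_iff_not_dvd.mpr hnot).pow_left
    have : ((p : ℤ)) ^ k ∣ (a + 1) := hcop.dvd_of_dvd_mul_left hdvd
    have : (((a + 1) : ℤ) : ZMod (p ^ k)) = 0 :=
      (ZMod.intCast_zmod_eq_zero_iff_dvd _ _).mpr (by exact_mod_cast this)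
    push_cast [hxa] at this
    linear_combination this

lemma units_sq_eq_one (p k : ℕ) (hp : p.Prime) (hodd : Odd p) (hk : 1 ≤ k)
    (u : (ZMod (p ^ k))ˣ) (h : u ^ 2 = 1) : u = 1 ∨ u = -1 := by
  have h' : (u : ZMod (p ^ k)) ^ 2 = 1 := by
    have := congrArg (Units.val) h
    push_cast at this
    exact_mod_cast this
  rcases zmod_sq_eq_one p k hp hodd hk _ h' with h1 | h1
  · left; exact Units.ext (by simpa using h1)
  · right; exact Units.ext (by simpa using h1)


/-- **Theorem 4 (Set of possible solutions mod p^k).**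
Let `p` be an odd prime, `k ≥ 1`, `φ(p^k) = 2^R * D` with `D` odd and `R ≥ 1`,
`α` a unit with `α^(φ(p^k)/2) = 1`, `β` a unit with `β^(φ(p^k)/2) = -1`.
If `0 ≤ j ≤ R - 1` satisfies `α^(2^j D) = 1`, then a square root of `α` lies in
`{ α^((D+1)/2) * β^(2^(R-1-j) i D) : 0 ≤ i ≤ 2^j - 1 }`. -/
theorem sqrt_mod_p_pow_in_solution_set (p : ℕ) (hp : p.Prime) (hodd : Odd p)
    (k : ℕ) (hk : 1 ≤ k)
    (R D : ℕ) (hR : 1 ≤ R) (hD : Odd D) (hphi : Nat.totient (p ^ k) = 2 ^ R * D)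
    (α β : (ZMod (p ^ k))ˣ)
    (hαres : α ^ (Nat.totient (p ^ k) / 2) = 1)
    (hβnres : β ^ (Nat.totient (p ^ k) / 2) = -1)
    (j : ℕ) (hj : j ≤ R - 1) (hαj : α ^ (2 ^ j * D) = 1) :
    ∃ i : ℕ, i ≤ 2 ^ j - 1 ∧
      (α ^ ((D + 1) / 2) * β ^ (2 ^ (R - 1 - j) * i * D)) ^ 2 = α := by
  -- β^(2^(R-1) * D) = -1
  have hhalf : Nat.totient (p ^ k) / 2 = 2 ^ (R - 1) * D := by
    rw [hphi]
    rcases Nat.exists_eq_add_of_le hR with ⟨m, hm⟩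
    subst hm
    simp [pow_succ, pow_add, Nat.mul_comm, Nat.mul_assoc, Nat.mul_div_cancel_left]
    ring_nf
    omega
  have hβ : β ^ (2 ^ (R - 1) * D) = -1 := by rw [← hhalf]; exact hβnres
  -- key induction
  have key : ∀ m, m < R → ∀ x : (ZMod (p ^ k))ˣ, x ^ (2 ^ m) = 1 →
      ∃ i, i < 2 ^ m ∧ x * β ^ (2 ^ (R - m) * i * D) = 1 := by
    intro m
    induction m with
    | zero =>
      intro _ x hx
      exact ⟨0, by norm_num, by simpa using hx⟩
    | succ n ih =>
      intro hm x hx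
      have hn : n < R := by omega
      have hy : (x ^ (2 ^ n)) ^ 2 = 1 := by
        rw [← pow_mul, ← pow_succ]; exact hx
      rcases units_sq_eq_one p k hp hodd hk _ hy with h1 | h1
      · obtain ⟨i, hi, hxi⟩ := ih hn x h1
        refine ⟨2 * i, by omega, ?_⟩
        have he : 2 ^ (R - (n + 1)) * (2 * i) * D = 2 ^ (R - n) * i * D := by
          have : R - n = (R - (n + 1)) + 1 := by omega
          rw [this, pow_succ]; ring
        rw [he]; exact hxi
      · set x' : (ZMod (p ^ k))ˣ := x * β ^ (2 ^ (R - (n + 1)) * D) with hx'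
        have hx'pow : x' ^ (2 ^ n) = 1 := by
          have he : 2 ^ (R - (n + 1)) * D * 2 ^ n = 2 ^ (R - 1) * D := by
            have : R - 1 = (R - (n + 1)) + n := by omega
            rw [this, pow_add]; ring
          rw [hx', mul_pow, h1, ← pow_mul, he, hβ]
          simp
        obtain ⟨i, hi, hxi⟩ := ih hn x' hx'pow
        refine ⟨2 * i + 1, by omega, ?_⟩
        have he : 2 ^ (R - (n + 1)) * (2 * i + 1) * D
            = 2 ^ (R - (n + 1)) * D + 2 ^ (R - n) * i * D := by
          have : R - n = (R - (n + 1)) + 1 := by omega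
          rw [this, pow_succ]; ring
        rw [he, pow_add, ← mul_assoc]
        rw [hx'] at hxi
        exact hxi
  have hjR : j < R := by omega
  have hαD : (α ^ D) ^ (2 ^ j) = 1 := by
    rw [← pow_mul, mul_comm]; exact hαj
  obtain ⟨i, hi, hxi⟩ := key j hjR (α ^ D) hαD
  refine ⟨i, by omega, ?_⟩
  have hDe : (D + 1) / 2 * 2 = D + 1 := by
    rcases hD with ⟨m, hm⟩; omega
  have he2 : 2 ^ (R - 1 - j) * i * D * 2 = 2 ^ (R - j) * i * D := by
    have : R - j = (R - 1 - j) + 1 := by omega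
    rw [this, pow_succ]; ring
  rw [mul_pow, ← pow_mul, ← pow_mul, hDe, he2, pow_succ, mul_comm (α ^ D) α, mul_assoc, hxi, mul_one]
end

section
/- Let p be an odd prime, write p − 1 = 2^r·d with d odd and r ≥ 1, and let α, γ be nonzero elements of Z/pZ with α a quadratic residue. Suppose s and t are integers with 0 ≤ s < t ≤ r − 1 such that α^(2^s·d) = −1 and γ^(2^t·d) = −1 (i.e. f(γ) = t > s = f(α), so γ is a relative non-residue to α). Then there exists a positive integer m such that α^d · γ^(2md) = 1 in Z/pZ; consequently (α^((d+1)/2) · γ^(md))^2 = α, i.e. α^((d+1)/2) · γ^(md) is a square root of α modulo p. -/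
/-!
Put `y = γ^(2d)`. Since `y^(2^(t-1)) = γ^(2^t d) = -1`, `y` is a primitive `2^t`-th root of
unity in the field `ZMod p`, so it generates all `2^t`-th roots of unity. As `s < t`, `α^d` is one
of them, say `α^d = y^i` with `i < 2^t`, and `m = 2^t - i` gives `α^d y^m = 1`. Multiplying by
`α` turns this into `(α^((d+1)/2) γ^(md))^2 = α`.
-/

theorem pow_two_pow_eq_one_of_pow_two_pow_eq_neg_one {M : Type*} [Monoid M] [HasDistribNeg M]
    {x : M} {s t : ℕ} (hx : x ^ 2 ^ s = -1) (hst : s < t) : x ^ 2 ^ t = 1 := by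
  obtain ⟨k, rfl⟩ := Nat.exists_eq_add_of_lt hst
  rw [show 2 ^ (s + k + 1) = 2 ^ s * 2 * 2 ^ k by ring, pow_mul, pow_mul, hx, neg_one_sq, one_pow]

theorem isPrimitiveRoot_of_pow_two_pow_eq_neg_one {M : Type*} [CommMonoid M] [HasDistribNeg M]
    (hM : (-1 : M) ≠ 1) {y : M} {n : ℕ} (hy : y ^ 2 ^ n = -1) :
    IsPrimitiveRoot y (2 ^ (n + 1)) :=
  orderOf_eq_prime_pow (hy ▸ hM) (pow_two_pow_eq_one_of_pow_two_pow_eq_neg_one hy n.lt_succ_self) ▸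
    IsPrimitiveRoot.orderOf y

theorem IsPrimitiveRoot.exists_pos_mul_pow_eq_one {R : Type*} [CommRing R] [IsDomain R]
    {k : ℕ} [NeZero k] {ζ ξ : R} (hζ : IsPrimitiveRoot ζ k) (hξ : ξ ^ k = 1) :
    ∃ m, 0 < m ∧ ξ * ζ ^ m = 1 := by
  obtain ⟨i, hik, rfl⟩ := hζ.eq_pow_of_pow_eq_one hξ
  exact ⟨k - i, by omega, by rw [← pow_add, Nat.add_sub_cancel' hik.le, hζ.pow_eq_one]⟩

theorem sq_pow_succ_div_two_mul_eq_self {M : Type*} [CommMonoid M] {d : ℕ} (hd : Odd d)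
    {a c : M} (h : a ^ d * c ^ 2 = 1) : (a ^ ((d + 1) / 2) * c) ^ 2 = a := by
  obtain ⟨k, rfl⟩ := hd
  calc (a ^ ((2 * k + 1 + 1) / 2) * c) ^ 2 = a * (a ^ (2 * k + 1) * c ^ 2) := by
        rw [show (2 * k + 1 + 1) / 2 = k + 1 by omega, mul_pow, ← pow_mul,
          show (k + 1) * 2 = 2 * k + 1 + 1 by ring, pow_succ', mul_assoc]
    _ = a := by rw [h, mul_one]

theorem sqrt_mod_p_relative_nonresidue_general (p : ℕ) (hp : p.Prime) (hodd : Odd p)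
    (d : ℕ) (hd : Odd d)
    (α γ : ZMod p)
    (s t : ℕ) (hst : s < t)
    (hαs : α ^ (2 ^ s * d) = -1) (hγt : γ ^ (2 ^ t * d) = -1) :
    ∃ m : ℕ, 0 < m ∧ α ^ d * γ ^ (2 * m * d) = 1 ∧
      (α ^ ((d + 1) / 2) * γ ^ (m * d)) ^ 2 = α := by
  have : Fact p.Prime := ⟨hp⟩
  have : Fact (2 < p) := ⟨by obtain ⟨k, rfl⟩ := hodd; have := hp.two_le; omega⟩
  obtain ⟨n, rfl⟩ : ∃ n, t = n + 1 := ⟨t - 1, by omega⟩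
  have hy : IsPrimitiveRoot (γ ^ (2 * d)) (2 ^ (n + 1)) :=
    isPrimitiveRoot_of_pow_two_pow_eq_neg_one ZMod.neg_one_ne_one
      (by rwa [← pow_mul, mul_right_comm, ← pow_succ'])
  have hαd : (α ^ d) ^ 2 ^ (n + 1) = 1 :=
    pow_two_pow_eq_one_of_pow_two_pow_eq_neg_one (by rwa [← pow_mul, mul_comm]) hst
  obtain ⟨m, hm, hαγ⟩ := hy.exists_pos_mul_pow_eq_one hαd
  rw [← pow_mul, mul_right_comm] at hαγ
  refine ⟨m, hm, hαγ, sq_pow_succ_div_two_mul_eq_self hd ?_⟩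
  rwa [← pow_mul, mul_comm (m * d), ← mul_assoc]

/-- **Theorem 5 (A relative non-residue suffices to compute square roots).**
Let `p` be an odd prime, `p - 1 = 2^r * d` with `d` odd, `α` a quadratic residue and
`γ` nonzero, with f-values `f(α) = s < t = f(γ) ≤ r - 1` (so `γ` is a relative
non-residue to `α`). Then there is `m > 0` with `α^d * γ^(2md) = 1`, hence
`α^((d+1)/2) * γ^(md)` is a square root of `α` mod `p`. -/
theorem sqrt_mod_p_relative_nonresidue (p : ℕ) (hp : p.Prime) (hodd : Odd p)
    (r d : ℕ) (hr : 1 ≤ r) (hd : Odd d) (hpd : p - 1 = 2 ^ r * d)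
    (α γ : ZMod p) (hα : α ≠ 0) (hγ : γ ≠ 0)
    (hαres : α ^ ((p - 1) / 2) = 1)
    (s t : ℕ) (hst : s < t) (ht : t ≤ r - 1)
    (hαs : α ^ (2 ^ s * d) = -1) (hγt : γ ^ (2 ^ t * d) = -1) :
    ∃ m : ℕ, 0 < m ∧ α ^ d * γ ^ (2 * m * d) = 1 ∧
      (α ^ ((d + 1) / 2) * γ ^ (m * d)) ^ 2 = α :=
  sqrt_mod_p_relative_nonresidue_general p hp hodd d hd α γ s t hst hαs hγt
end

section
/- Let p be an odd prime and write p − 1 = 2^r·d with d odd and r ≥ 1. The number of ordered pairs (α, γ) of nonzero elements of Z/pZ such that α is a quadratic residue and γ is a relative non-residue to α (i.e. f(γ) > f(α)) is exactly d²·(4^r − 1)/3. Equivalently, the probability that a uniformly random γ in (Z/pZ)* is a relative non-residue to a uniformly random quadratic residue α equals (2/3)·(1 − 1/2^(2r)). -/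
/-- `γ` is a *relative non-residue* to `α` (i.e. `f(γ) > f(α)`): either `f(α) = -1`
(that is, `α^d = 1`) while `f(γ) ≥ 0` (that is, `γ^d ≠ 1`), or there are f-values
`s < t` with `α^(2^s d) = -1` and `γ^(2^t d) = -1`. -/
def IsRelativeNonResidue (p d : ℕ) (α γ : ZMod p) : Prop :=
  (α ^ d = 1 ∧ γ ^ d ≠ 1) ∨ ∃ s t : ℕ, s < t ∧ α ^ (2 ^ s * d) = -1 ∧ γ ^ (2 ^ t * d) = -1

/-!
The sets `S t = {x | x ^ (2 ^ t * d) = 1}` (`t ≤ r`) are the subgroups of order `2 ^ t * d`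
of the cyclic group `(ZMod p)ˣ`, and `x` has f-value `t` exactly when `x ^ (2 ^ t * d) = -1`,
i.e. when `x ∈ S (t + 1) \ S t`, a set of `2 ^ t * d` elements. A relative non-residue `γ` of
f-value `t < r` is paired with exactly the `α ∈ S t`, all of which are quadratic residues, so
the pairs number `∑_{t < r} (2 ^ t * d) ^ 2 = d ^ 2 (4 ^ r - 1) / 3`.
-/

open Finset

section PowTwoPow

variable {R : Type*}

theorem pow_two_pow_mul_eq_one_of_le [Monoid R] {x : R} {m j k : ℕ} (hjk : j ≤ k)
    (h : x ^ (2 ^ j * m) = 1) : x ^ (2 ^ k * m) = 1 := by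
  obtain ⟨c, hc⟩ := Nat.mul_dvd_mul_right (Nat.pow_dvd_pow 2 hjk) m
  rw [hc, pow_mul, h, one_pow]

theorem pow_two_pow_mul_eq_one_of_lt [Monoid R] [HasDistribNeg R] {x : R} {m s t : ℕ}
    (hst : s < t) (h : x ^ (2 ^ s * m) = -1) : x ^ (2 ^ t * m) = 1 := by
  obtain ⟨k, rfl⟩ := Nat.exists_eq_add_of_lt hst
  rw [show 2 ^ (s + k + 1) * m = 2 ^ s * m * (2 ^ k + 2 ^ k) by ring, pow_mul, h,
    Even.neg_one_pow ⟨_, rfl⟩]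

theorem eq_of_pow_two_pow_mul_eq_neg_one [Monoid R] [HasDistribNeg R]
    (h : (-1 : R) ≠ 1) {x : R} {m s t : ℕ} (hs : x ^ (2 ^ s * m) = -1)
    (ht : x ^ (2 ^ t * m) = -1) : s = t := by
  by_contra hst
  rcases Nat.lt_or_gt_of_ne hst with hlt | hlt
  · exact h (ht ▸ pow_two_pow_mul_eq_one_of_lt hlt hs)
  · exact h (hs ▸ pow_two_pow_mul_eq_one_of_lt hlt ht)

theorem pow_eq_neg_one_iff_pow_mul_two_eq_one_and_ne_one [Ring R] [NoZeroDivisors R]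
    (h : (-1 : R) ≠ 1) {x : R} {n : ℕ} : x ^ n = -1 ↔ x ^ (n * 2) = 1 ∧ x ^ n ≠ 1 := by
  rw [pow_mul, sq_eq_one_iff]
  exact ⟨fun hx => ⟨Or.inr hx, hx ▸ h⟩, fun ⟨hx, hne⟩ => hx.resolve_left hne⟩

theorem exists_pow_two_pow_mul_eq_neg_one [Ring R] [NoZeroDivisors R] {x : R} {m : ℕ}
    (hx : x ^ m ≠ 1) : ∀ {n : ℕ}, x ^ (2 ^ n * m) = 1 → ∃ t < n, x ^ (2 ^ t * m) = -1
  | 0, h => (hx (by simpa using h)).elim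
  | n + 1, h => by
    by_cases hn : x ^ (2 ^ n * m) = 1
    · obtain ⟨t, ht, h'⟩ := exists_pow_two_pow_mul_eq_neg_one hx hn
      exact ⟨t, by omega, h'⟩
    · refine ⟨n, n.lt_succ_self, (sq_eq_one_iff.mp ?_).resolve_left hn⟩
      rwa [← pow_mul, mul_right_comm, ← pow_succ]

end PowTwoPow

namespace FiniteField

variable {K : Type*} [Field K] [Fintype K] [DecidableEq K]

theorem card_filter_pow_eq_one {n : ℕ} (hn : n ∣ Fintype.card K - 1) :
    #{x : K | x ^ n = 1} = n := by
  obtain ⟨g, hg⟩ := IsCyclic.exists_generator (α := Kˣ)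
  have hg' : IsPrimitiveRoot (g : K) (Fintype.card K - 1) := by
    rw [IsPrimitiveRoot.coe_units_iff, ← Nat.card_eq_fintype_card, ← Nat.card_units,
      ← orderOf_eq_card_of_forall_mem_zpowers hg]
    exact IsPrimitiveRoot.orderOf g
  have hq : 0 < Fintype.card K - 1 := Nat.sub_pos_of_lt Fintype.one_lt_card
  have hn0 : 0 < n := Nat.pos_of_dvd_of_pos hn hq
  obtain ⟨m, hm⟩ := hn
  have hgm : IsPrimitiveRoot ((g : K) ^ m) n := hg'.pow hq (by rw [hm, mul_comm])
  have hroots : ({x : K | x ^ n = 1} : Finset K) = Polynomial.nthRootsFinset n (1 : K) := by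
    ext x
    simp [Polynomial.mem_nthRootsFinset hn0]
  rw [hroots, hgm.card_nthRootsFinset]

theorem card_filter_pow_eq_neg_one (hK : ringChar K ≠ 2) {n : ℕ}
    (hn : n * 2 ∣ Fintype.card K - 1) : #{x : K | x ^ n = -1} = n := by
  have hsub : (univ.filter fun x : K => x ^ n = 1) ⊆ univ.filter fun x => x ^ (n * 2) = 1 :=
    monotone_filter_right univ fun x _ hx => by rw [pow_mul, hx, one_pow]
  have heq : (univ.filter fun x : K => x ^ n = -1) =
      (univ.filter fun x => x ^ (n * 2) = 1) \ univ.filter fun x => x ^ n = 1 := by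
    ext x
    simp [pow_eq_neg_one_iff_pow_mul_two_eq_one_and_ne_one (Ring.neg_one_ne_one_of_char_ne_two hK)]
  rw [heq, card_sdiff_of_subset hsub, card_filter_pow_eq_one hn,
    card_filter_pow_eq_one (dvd_trans (dvd_mul_right n 2) hn)]
  omega

end FiniteField

namespace ZMod

variable {p r d : ℕ} [Fact p.Prime]

theorem isRelativeNonResidue_iff (hp2 : p ≠ 2) (hpd : p - 1 = 2 ^ r * d) {α γ : ZMod p}
    (hγ : γ ≠ 0) :
    IsRelativeNonResidue p d α γ ↔ ∃ t < r, α ^ (2 ^ t * d) = 1 ∧ γ ^ (2 ^ t * d) = -1 := by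
  have hne : (-1 : ZMod p) ≠ 1 := Ring.neg_one_ne_one_of_char_ne_two (by rwa [ringChar_zmod_n])
  have hγr : γ ^ (2 ^ r * d) = 1 := hpd ▸ pow_card_sub_one_eq_one hγ
  constructor
  · rintro (⟨hα, hγd⟩ | ⟨s, t, hst, hαs, hγt⟩)
    · obtain ⟨t, ht, hγt⟩ := exists_pow_two_pow_mul_eq_neg_one hγd hγr
      exact ⟨t, ht, pow_two_pow_mul_eq_one_of_le (Nat.zero_le t) (by simpa using hα), hγt⟩
    · refine ⟨t, lt_of_not_ge fun hrt => hne ?_, pow_two_pow_mul_eq_one_of_lt hst hαs, hγt⟩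
      rw [← hγt, pow_two_pow_mul_eq_one_of_le hrt hγr]
  · rintro ⟨t, -, hαt, hγt⟩
    by_cases hα : α ^ d = 1
    · refine Or.inl ⟨hα, fun hγd => hne ?_⟩
      rw [← hγt, pow_two_pow_mul_eq_one_of_le (Nat.zero_le t) (by simpa using hγd)]
    · obtain ⟨s, hst, hαs⟩ := exists_pow_two_pow_mul_eq_neg_one hα hαt
      exact Or.inr ⟨s, t, hst, hαs, hγt⟩

theorem relativeNonResiduePair_iff (hp2 : p ≠ 2) (hpd : p - 1 = 2 ^ r * d) {α γ : ZMod p} :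
    (α ≠ 0 ∧ γ ≠ 0 ∧ α ^ ((p - 1) / 2) = 1 ∧ IsRelativeNonResidue p d α γ) ↔
      ∃ t < r, α ^ (2 ^ t * d) = 1 ∧ γ ^ (2 ^ t * d) = -1 := by
  constructor
  · rintro ⟨-, hγ, -, h⟩
    exact (isRelativeNonResidue_iff hp2 hpd hγ).mp h
  · rintro ⟨t, htr, hαt, hγt⟩
    have hd : d ≠ 0 := by
      rintro rfl
      have := (Fact.out : p.Prime).two_le
      omega
    have hγ : γ ≠ 0 := by
      rintro rfl
      rw [zero_pow (by positivity)] at hγt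
      exact neg_ne_zero.mpr one_ne_zero hγt.symm
    have hα : α ≠ 0 := by
      rintro rfl
      rw [zero_pow (by positivity)] at hαt
      exact zero_ne_one hαt
    obtain ⟨k, rfl⟩ : ∃ k, r = k + 1 := ⟨r - 1, by omega⟩
    have hhalf : (p - 1) / 2 = 2 ^ k * d := by
      rw [hpd, pow_succ, mul_right_comm, Nat.mul_div_cancel _ two_pos]
    refine ⟨hα, hγ, ?_, (isRelativeNonResidue_iff hp2 hpd hγ).mpr ⟨t, htr, hαt, hγt⟩⟩
    rw [hhalf]
    exact pow_two_pow_mul_eq_one_of_le (by omega) hαt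

theorem card_relativeNonResiduePairs (hp2 : p ≠ 2) (hpd : p - 1 = 2 ^ r * d) :
    Nat.card {q : ZMod p × ZMod p //
        q.1 ≠ 0 ∧ q.2 ≠ 0 ∧ q.1 ^ ((p - 1) / 2) = 1 ∧ IsRelativeNonResidue p d q.1 q.2}
      = d ^ 2 * ∑ t ∈ range r, 4 ^ t := by
  classical
  have hne : (-1 : ZMod p) ≠ 1 := Ring.neg_one_ne_one_of_char_ne_two (by rwa [ringChar_zmod_n])
  set piece : ℕ → Finset (ZMod p × ZMod p) := fun t =>
    (univ.filter fun x => x ^ (2 ^ t * d) = 1) ×ˢ univ.filter fun x => x ^ (2 ^ t * d) = -1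
  have hdisj : (range r : Set ℕ).PairwiseDisjoint piece := by
    intro s _ t _ hst
    refine disjoint_left.mpr fun q hs ht => hst ?_
    simp only [piece, mem_product, mem_filter, mem_univ, true_and] at hs ht
    exact eq_of_pow_two_pow_mul_eq_neg_one hne hs.2 ht.2
  have hdvd : ∀ t < r, 2 ^ t * d * 2 ∣ Fintype.card (ZMod p) - 1 := fun t ht => by
    rw [card, hpd, mul_right_comm, ← pow_succ]
    exact Nat.mul_dvd_mul_right (Nat.pow_dvd_pow 2 ht) d
  calc Nat.card {q : ZMod p × ZMod p //
        q.1 ≠ 0 ∧ q.2 ≠ 0 ∧ q.1 ^ ((p - 1) / 2) = 1 ∧ IsRelativeNonResidue p d q.1 q.2}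
      = Nat.card ((range r).biUnion piece) := Nat.card_congr <| Equiv.subtypeEquivRight fun q => by
        simp [piece, relativeNonResiduePair_iff hp2 hpd]
    _ = ∑ t ∈ range r, (2 ^ t * d) * (2 ^ t * d) := by
      rw [Nat.card_eq_finsetCard, card_biUnion hdisj]
      refine sum_congr rfl fun t ht => ?_
      have hdvd' := hdvd t (mem_range.mp ht)
      rw [card_product, FiniteField.card_filter_pow_eq_one (dvd_trans (dvd_mul_right _ 2) hdvd'),
        FiniteField.card_filter_pow_eq_neg_one (by rwa [ringChar_zmod_n]) hdvd']
    _ = d ^ 2 * ∑ t ∈ range r, 4 ^ t := by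
      rw [mul_sum]
      refine sum_congr rfl fun t _ => ?_
      rw [show (4 : ℕ) ^ t = 2 ^ t * 2 ^ t by rw [← mul_pow]; rfl]
      ring

end ZMod

theorem card_relative_nonresidue_pairs_general (p : ℕ) (hp : p.Prime) (hodd : Odd p)
    (r d : ℕ) (hpd : p - 1 = 2 ^ r * d) :
    Nat.card {q : ZMod p × ZMod p //
        q.1 ≠ 0 ∧ q.2 ≠ 0 ∧ q.1 ^ ((p - 1) / 2) = 1 ∧ IsRelativeNonResidue p d q.1 q.2}
      = d ^ 2 * (4 ^ r - 1) / 3 ∧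
    (Nat.card {q : ZMod p × ZMod p //
        q.1 ≠ 0 ∧ q.2 ≠ 0 ∧ q.1 ^ ((p - 1) / 2) = 1 ∧ IsRelativeNonResidue p d q.1 q.2} : ℚ)
        / ((((p : ℚ) - 1) / 2) * ((p : ℚ) - 1))
      = 2 / 3 * (1 - 1 / 2 ^ (2 * r)) := by
  have : Fact p.Prime := ⟨hp⟩
  have hp2 : p ≠ 2 := by
    rintro rfl
    exact Nat.not_odd_iff_even.mpr even_two hodd
  rw [ZMod.card_relativeNonResiduePairs hp2 hpd]
  constructor
  · have h3 : 3 ∣ 4 ^ r - 1 := by simpa using Nat.sub_dvd_pow_sub_pow 4 1 r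
    rw [Nat.geomSum_eq (by norm_num), Nat.mul_div_assoc _ h3]
  · have hp1 : (p : ℚ) - 1 = 2 ^ r * d := by
      rw [← Nat.cast_pred hp.pos, hpd]
      push_cast
      ring
    have hd : (d : ℚ) ≠ 0 := by
      rintro hd
      rw [hd, mul_zero, sub_eq_zero] at hp1
      exact hp.one_lt.ne' (by exact_mod_cast hp1)
    push_cast
    rw [geom_sum_eq (by norm_num), hp1, show (4 : ℚ) ^ r = 2 ^ (2 * r) by rw [pow_mul]; norm_num]
    field_simp
    ring

/-- **Theorem 6 (Relative non-residues are easier to find than non-residues).**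
Let `p` be an odd prime, `p - 1 = 2^r * d` with `d` odd and `r ≥ 1`. The number of
ordered pairs `(α, γ)` of nonzero elements of `Z/pZ` with `α` a quadratic residue and
`γ` a relative non-residue to `α` is exactly `d² (4^r - 1) / 3`; equivalently, the
probability that a random `γ` is a relative non-residue to a random quadratic residue
`α` is `(2/3)(1 - 1/2^(2r))`. -/
theorem card_relative_nonresidue_pairs (p : ℕ) (hp : p.Prime) (hodd : Odd p)
    (r d : ℕ) (hr : 1 ≤ r) (hd : Odd d) (hpd : p - 1 = 2 ^ r * d) :
    Nat.card {q : ZMod p × ZMod p //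
        q.1 ≠ 0 ∧ q.2 ≠ 0 ∧ q.1 ^ ((p - 1) / 2) = 1 ∧ IsRelativeNonResidue p d q.1 q.2}
      = d ^ 2 * (4 ^ r - 1) / 3 ∧
    (Nat.card {q : ZMod p × ZMod p //
        q.1 ≠ 0 ∧ q.2 ≠ 0 ∧ q.1 ^ ((p - 1) / 2) = 1 ∧ IsRelativeNonResidue p d q.1 q.2} : ℚ)
        / ((((p : ℚ) - 1) / 2) * ((p : ℚ) - 1))
      = 2 / 3 * (1 - 1 / 2 ^ (2 * r)) :=
  card_relative_nonresidue_pairs_general p hp hodd r d hpd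
end
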